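/- arXiv:2407.17928 — 2 statements merged into one kernel-verified Lean document; each statement's English description precedes it below -/
import Mathlib

section
/- (Discrete Picone inequality) Let 1 < p < ∞ and let a, b, c, d be nonnegative real numbers with a > 0 and b > 0. Then |a − b|^{p−2}(a − b) ( c^p / a^{p−1} − d^p / b^{p−1} ) ≤ |c − d|^p. -/
/-!
Assume `b < a` (the left side is symmetric under `(a, c) ↔ (b, d)` and vanishes for `a = b`).
Convexity of `t ↦ t ^ p` gives, for positive weights `α + β = a`,
`(x + y) ^ p ≤ a ^ (p - 1) * (x ^ p / α ^ (p - 1) + y ^ p / β ^ (p - 1))`; applied with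
`x = |c - d|`, `y = d`, `α = a - b`, `β = b` and `c ≤ |c - d| + d`, this is the inequality after
multiplying by `(a - b) ^ (p - 1) / a ^ (p - 1)`.
-/

open Real

lemma rpow_add_le_rpow_add_mul_div_rpow_add_div_rpow {p : ℝ} (hp : 1 ≤ p) {x y α β : ℝ}
    (hx : 0 ≤ x) (hy : 0 ≤ y) (hα : 0 < α) (hβ : 0 < β) :
    (x + y) ^ p ≤ (α + β) ^ (p - 1) * (x ^ p / α ^ (p - 1) + y ^ p / β ^ (p - 1)) := by
  have hs : 0 < α + β := add_pos hα hβ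
  have hconv := (convexOn_rpow hp).2 (Set.mem_Ici.2 (by positivity : 0 ≤ (α + β) / α * x))
    (Set.mem_Ici.2 (by positivity : 0 ≤ (α + β) / β * y)) (by positivity : 0 ≤ α / (α + β))
    (by positivity : 0 ≤ β / (α + β)) (by field_simp)
  have hsum : α / (α + β) * ((α + β) / α * x) + β / (α + β) * ((α + β) / β * y) = x + y := by
    field_simp
  have hterm : ∀ {γ z : ℝ}, 0 < γ → 0 ≤ z →
      γ / (α + β) * ((α + β) / γ * z) ^ p = (α + β) ^ (p - 1) * (z ^ p / γ ^ (p - 1)) := by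
    intro γ z hγ hz
    rw [mul_rpow (by positivity) hz, div_rpow hs.le hγ.le, rpow_sub_one hs.ne',
      rpow_sub_one hγ.ne']
    field_simp
  simpa only [smul_eq_mul, hsum, hterm hα hx, hterm hβ hy, mul_add] using hconv

lemma abs_rpow_sub_two_mul_self_of_pos {t : ℝ} (ht : 0 < t) (p : ℝ) :
    |t| ^ (p - 2) * t = t ^ (p - 1) := by
  rw [abs_of_pos ht, ← rpow_add_one ht.ne']
  ring_nf

lemma picone_of_lt {p : ℝ} (hp : 1 ≤ p) {a b c d : ℝ} (hb : 0 < b) (hba : b < a)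
    (hc : 0 ≤ c) (hd : 0 ≤ d) :
    (a - b) ^ (p - 1) * (c ^ p / a ^ (p - 1) - d ^ p / b ^ (p - 1)) ≤ |c - d| ^ p := by
  have hab : 0 < a - b := sub_pos.2 hba
  have hE : 0 < (a - b) ^ (p - 1) := rpow_pos_of_pos hab _
  have hconv : c ^ p ≤ a ^ (p - 1) * (|c - d| ^ p / (a - b) ^ (p - 1) + d ^ p / b ^ (p - 1)) :=
    calc c ^ p ≤ (|c - d| + d) ^ p :=
          rpow_le_rpow hc (by linarith [le_abs_self (c - d)]) (by linarith)
      _ ≤ (a - b + b) ^ (p - 1) * (|c - d| ^ p / (a - b) ^ (p - 1) + d ^ p / b ^ (p - 1)) :=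
          rpow_add_le_rpow_add_mul_div_rpow_add_div_rpow hp (abs_nonneg _) hd hab hb
      _ = _ := by rw [sub_add_cancel]
  have hdiv : c ^ p / a ^ (p - 1) - d ^ p / b ^ (p - 1) ≤ |c - d| ^ p / (a - b) ^ (p - 1) := by
    rw [sub_le_iff_le_add, div_le_iff₀ (rpow_pos_of_pos (hb.trans hba) _), mul_comm]
    exact hconv
  calc (a - b) ^ (p - 1) * (c ^ p / a ^ (p - 1) - d ^ p / b ^ (p - 1))
      ≤ (a - b) ^ (p - 1) * (|c - d| ^ p / (a - b) ^ (p - 1)) :=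
        mul_le_mul_of_nonneg_left hdiv hE.le
    _ = |c - d| ^ p := mul_div_cancel₀ _ hE.ne'

/-- Discrete Picone inequality (pointwise form): for `1 < p`, `a, b > 0` and `c, d ≥ 0`,
`|a − b|^{p−2}(a − b)(c^p/a^{p−1} − d^p/b^{p−1}) ≤ |c − d|^p`. -/
theorem discrete_picone_inequality (p : ℝ) (hp : 1 < p)
    (a b c d : ℝ) (ha : 0 < a) (hb : 0 < b) (hc : 0 ≤ c) (hd : 0 ≤ d) :
    |a - b| ^ (p - 2) * (a - b) * (c ^ p / a ^ (p - 1) - d ^ p / b ^ (p - 1))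
      ≤ |c - d| ^ p := by
  rcases lt_trichotomy b a with hba | rfl | hab
  · rw [abs_rpow_sub_two_mul_self_of_pos (sub_pos.2 hba)]
    exact picone_of_lt hp.le hb hba hc hd
  · simp only [sub_self, mul_zero, zero_mul]
    positivity
  · have hswap := picone_of_lt hp.le ha hab hd hc
    rw [← abs_rpow_sub_two_mul_self_of_pos (sub_pos.2 hab), abs_sub_comm, abs_sub_comm d] at hswap
    linarith
end

section
/- Let α > 0 and define ζ₊(f,k) = α ∫_k^f |s|^{α−1} (s−k)₊ ds and ζ₋(f,k) = −α ∫_k^f |s|^{α−1} (s−k)₋ ds for f, k ∈ ℝ. Then there exists a constant γ = γ(α) > 0 such that for all f, k ∈ ℝ: (1/γ) (|f|+|k|)^{α−1} (f−k)₊² ≤ ζ₊(f,k) ≤ γ (|f|+|k|)^{α−1} (f−k)₊², and the same two-sided bound holds for ζ₋ with (f−k)₋ in place of (f−k)₊. -/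
open Real MeasureTheory

/-!
Let `φ(x) = sign x · |x|^α`, so that `α ∫_b^a |s|^(α-1) ds = φ(a) - φ(b)`. The increment
`φ(a) - φ(b)` is comparable to `(|a| + |b|)^(α-1) (a - b)`: after reflecting so that `|b| ≤ a`,
it is `a^α - b^α` (Bernoulli's inequality after scaling `a` to `1`) or `a^α + |b|^α`, and `a` is
comparable to `|a| + |b|`. For `k < f`, bounding the weight `s - k` above by `f - k` on `[k, f]`
and below by `(f - k)/2` on its upper half gives
`(f - k)/2 · (φ(f) - φ((k + f)/2)) ≤ ζ₊(f, k) ≤ (f - k) (φ(f) - φ(k))`.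
Finally `ζ₋(f, k) = ζ₊(-f, -k)`.
-/

noncomputable def signedRpow (α x : ℝ) : ℝ := if 0 ≤ x then x ^ α else -(-x) ^ α

section SignedRpow

variable {α x : ℝ}

lemma signedRpow_of_nonneg (hx : 0 ≤ x) : signedRpow α x = x ^ α := if_pos hx

lemma signedRpow_of_neg (hx : x < 0) : signedRpow α x = -(-x) ^ α := if_neg hx.not_ge

lemma signedRpow_neg (hα : α ≠ 0) (x : ℝ) : signedRpow α (-x) = -signedRpow α x := by
  rcases lt_trichotomy x 0 with hx | rfl | hx
  · rw [signedRpow_of_nonneg (neg_nonneg.2 hx.le), signedRpow_of_neg hx, neg_neg]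
  · simp [signedRpow, zero_rpow hα]
  · rw [signedRpow_of_neg (neg_neg_of_pos hx), signedRpow_of_nonneg hx.le, neg_neg]

end SignedRpow

lemma intervalIntegrable_abs_rpow {r : ℝ} (hr : -1 < r) (a b : ℝ) :
    IntervalIntegrable (fun s => |s| ^ r) volume a b :=
  intervalIntegrable_of_even (fun x => by rw [abs_neg]) fun c hc =>
    (intervalIntegral.intervalIntegrable_rpow' hr).congr fun s hs => by
      rw [Set.uIoc_of_le hc.le] at hs
      simp only [abs_of_pos hs.1]

lemma mul_integral_abs_rpow_sub_one_of_nonneg {α c : ℝ} (hα : 0 < α) (hc : 0 ≤ c) :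
    α * ∫ s in (0 : ℝ)..c, |s| ^ (α - 1) = c ^ α := by
  rw [intervalIntegral.integral_congr (g := fun s => s ^ (α - 1)) fun s hs => by
      rw [Set.uIcc_of_le hc] at hs
      simp only [abs_of_nonneg hs.1],
    integral_rpow (Or.inl (by linarith)), sub_add_cancel, zero_rpow hα.ne', sub_zero]
  field_simp

lemma mul_integral_abs_rpow_sub_one {α : ℝ} (hα : 0 < α) (a b : ℝ) :
    α * ∫ s in a..b, |s| ^ (α - 1) = signedRpow α b - signedRpow α a := by
  have from_zero : ∀ c, α * ∫ s in (0 : ℝ)..c, |s| ^ (α - 1) = signedRpow α c := by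
    intro c
    rcases le_or_gt 0 c with hc | hc
    · rw [mul_integral_abs_rpow_sub_one_of_nonneg hα hc, signedRpow_of_nonneg hc]
    · have reflect := intervalIntegral.integral_comp_neg (a := 0) (b := c)
        (fun s => |s| ^ (α - 1))
      simp only [abs_neg, neg_zero] at reflect
      rw [reflect, intervalIntegral.integral_symm, mul_neg,
        mul_integral_abs_rpow_sub_one_of_nonneg hα (neg_nonneg.2 hc.le), signedRpow_of_neg hc]
  have integrable := intervalIntegrable_abs_rpow (r := α - 1) (by linarith)
  rw [← intervalIntegral.integral_interval_sub_left (integrable 0 b) (integrable 0 a), mul_sub,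
    from_zero, from_zero]

lemma one_sub_rpow_bounds {α t : ℝ} (hα : 0 < α) (ht₀ : 0 ≤ t) (ht₁ : t ≤ 1) :
    min α 1 * (1 - t) ≤ 1 - t ^ α ∧ 1 - t ^ α ≤ max α 1 * (1 - t) := by
  rcases le_total α 1 with hα₁ | hα₁
  · have bernoulli := rpow_one_add_le_one_add_mul_self (s := t - 1) (by linarith) hα.le hα₁
    rw [add_sub_cancel] at bernoulli
    rw [min_eq_left hα₁, max_eq_right hα₁]
    have := self_le_rpow_of_le_one ht₀ ht₁ hα₁
    constructor <;> linarith
  · have bernoulli := one_add_mul_self_le_rpow_one_add (s := t - 1) (by linarith) hα₁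
    rw [add_sub_cancel] at bernoulli
    rw [min_eq_right hα₁, max_eq_left hα₁]
    have := rpow_le_self_of_le_one ht₀ ht₁ hα₁
    constructor <;> linarith

lemma rpow_sub_rpow_bounds {α a b : ℝ} (hα : 0 < α) (hb : 0 ≤ b) (hba : b ≤ a) :
    min α 1 * (a ^ (α - 1) * (a - b)) ≤ a ^ α - b ^ α ∧
      a ^ α - b ^ α ≤ max α 1 * (a ^ (α - 1) * (a - b)) := by
  rcases (hb.trans hba).eq_or_lt with rfl | ha
  · obtain rfl : b = 0 := le_antisymm hba hb
    simp
  obtain ⟨t, ht₀, ht₁, rfl⟩ : ∃ t, 0 ≤ t ∧ t ≤ 1 ∧ b = a * t :=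
    ⟨b / a, div_nonneg hb ha.le, (div_le_one ha).2 hba, by field_simp⟩
  have diff_pow : a ^ α - (a * t) ^ α = a ^ α * (1 - t ^ α) := by
    rw [mul_rpow ha.le ht₀]; ring
  have diff : a ^ (α - 1) * (a - a * t) = a ^ α * (1 - t) := by
    rw [rpow_sub_one ha.ne']; field_simp
  obtain ⟨lower, upper⟩ := one_sub_rpow_bounds hα ht₀ ht₁
  have hpow : 0 ≤ a ^ α := rpow_nonneg ha.le α
  rw [diff_pow, diff, mul_left_comm, mul_left_comm (max α 1)]
  exact ⟨mul_le_mul_of_nonneg_left lower hpow, mul_le_mul_of_nonneg_left upper hpow⟩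

lemma rpow_add_rpow_bounds {α a c : ℝ} (hα : 0 < α) (ha : 0 < a) (hc : 0 ≤ c)
    (hca : c ≤ a) :
    1 / 2 * (a ^ (α - 1) * (a + c)) ≤ a ^ α + c ^ α ∧
      a ^ α + c ^ α ≤ 2 * (a ^ (α - 1) * (a + c)) := by
  have hca_pow : c ^ α ≤ a ^ α := rpow_le_rpow hc hca hα.le
  have hc_pow : 0 ≤ c ^ α := rpow_nonneg hc α
  have split : a ^ (α - 1) * (a + c) = a ^ α + a ^ (α - 1) * c := by
    rw [rpow_sub_one ha.ne']; field_simp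
  have lin : 0 ≤ a ^ (α - 1) * c := mul_nonneg (rpow_nonneg ha.le _) hc
  have lin_le : a ^ (α - 1) * c ≤ a ^ α := by
    rw [rpow_sub_one ha.ne', div_mul_eq_mul_div, div_le_iff₀ ha]
    exact mul_le_mul_of_nonneg_left hca (rpow_nonneg ha.le α)
  rw [split]
  constructor <;> linarith

lemma signedRpow_sub_bounds_of_abs_le {α a b : ℝ} (hα : 0 < α) (hba : b < a) (hb : |b| ≤ a) :
    min α 1 / 2 * (a ^ (α - 1) * (a - b)) ≤ signedRpow α a - signedRpow α b ∧
      signedRpow α a - signedRpow α b ≤ max α 2 * (a ^ (α - 1) * (a - b)) := by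
  have ha : 0 < a := by cases abs_le.1 hb; linarith
  have hX : 0 ≤ a ^ (α - 1) * (a - b) := mul_nonneg (rpow_nonneg ha.le _) (by linarith)
  have hmin : min α 1 / 2 ≤ min α 1 := by linarith [lt_min hα one_pos]
  rw [signedRpow_of_nonneg ha.le]
  rcases le_or_gt 0 b with hb₀ | hb₀
  · obtain ⟨lower, upper⟩ := rpow_sub_rpow_bounds hα hb₀ hba.le
    have hmax : max α 1 ≤ max α 2 := max_le_max le_rfl one_le_two
    rw [signedRpow_of_nonneg hb₀]
    exact ⟨(mul_le_mul_of_nonneg_right hmin hX).trans lower,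
      upper.trans (mul_le_mul_of_nonneg_right hmax hX)⟩
  · obtain ⟨lower, upper⟩ :=
      rpow_add_rpow_bounds hα ha (neg_nonneg.2 hb₀.le) ((neg_le_abs b).trans hb)
    rw [← sub_eq_add_neg] at lower upper
    rw [signedRpow_of_neg hb₀, sub_neg_eq_add]
    exact ⟨(mul_le_mul_of_nonneg_right (by linarith [min_le_right α 1]) hX).trans lower,
      upper.trans (mul_le_mul_of_nonneg_right (le_max_right α 2) hX)⟩

lemma rpow_le_rpow_abs_mul_rpow {x y c p : ℝ} (hx : 0 < x) (hc : 1 ≤ c) (hxy : x ≤ c * y)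
    (hyx : y ≤ c * x) : x ^ p ≤ c ^ |p| * y ^ p := by
  have hc₀ : 0 < c := one_pos.trans_le hc
  have hy : 0 < y := pos_of_mul_pos_right (hx.trans_le hxy) hc₀.le
  rcases le_total 0 p with hp | hp
  · rw [abs_of_nonneg hp, ← mul_rpow hc₀.le hy.le]
    exact rpow_le_rpow hx.le hxy hp
  · rw [abs_of_nonpos hp, rpow_neg hc₀.le, ← div_eq_inv_mul, ← div_rpow hy.le hc₀.le]
    exact rpow_le_rpow_of_nonpos (div_pos hy hc₀) ((div_le_iff₀' hc₀).2 hyx) hp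

lemma signedRpow_sub_bounds {α a b : ℝ} (hα : 0 < α) (hba : b < a) :
    min α 1 / (2 * 2 ^ |α - 1|) * ((|a| + |b|) ^ (α - 1) * (a - b))
        ≤ signedRpow α a - signedRpow α b ∧
      signedRpow α a - signedRpow α b
        ≤ max α 2 * 2 ^ |α - 1| * ((|a| + |b|) ^ (α - 1) * (a - b)) := by
  obtain ⟨R, hR, hRM, hMR, lower, upper⟩ : ∃ R, 0 < R ∧ R ≤ 2 * (|a| + |b|) ∧
      |a| + |b| ≤ 2 * R ∧
      min α 1 / 2 * (R ^ (α - 1) * (a - b)) ≤ signedRpow α a - signedRpow α b ∧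
      signedRpow α a - signedRpow α b ≤ max α 2 * (R ^ (α - 1) * (a - b)) := by
    rcases le_or_gt |b| a with hb | hb
    · have ha : 0 < a := by cases abs_le.1 hb; linarith
      refine ⟨a, ha, ?_, ?_, signedRpow_sub_bounds_of_abs_le hα hba hb⟩ <;>
        linarith [le_abs_self a, abs_of_pos ha, abs_nonneg b]
    · have hb₀ : b < 0 := by
        by_contra! hb₀
        rw [abs_of_nonneg hb₀] at hb
        linarith
      have ha : |-a| ≤ -b := by rw [abs_neg, abs_le]; constructor <;> linarith [abs_of_neg hb₀]
      have h := signedRpow_sub_bounds_of_abs_le hα (neg_lt_neg hba) ha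
      rw [signedRpow_neg hα.ne', signedRpow_neg hα.ne', neg_sub_neg, neg_sub_neg] at h
      refine ⟨-b, neg_pos.2 hb₀, ?_, ?_, h⟩ <;>
        linarith [abs_of_neg hb₀, abs_nonneg a, abs_neg a ▸ ha]
  have hκ : 0 < (2 : ℝ) ^ |α - 1| := rpow_pos_of_pos two_pos _
  have hM : 0 < |a| + |b| := by linarith
  have hd : 0 ≤ a - b := by linarith
  have hMR' := rpow_le_rpow_abs_mul_rpow (p := α - 1) hM one_le_two hMR hRM
  have hRM' := rpow_le_rpow_abs_mul_rpow (p := α - 1) hR one_le_two hRM hMR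
  constructor
  · calc min α 1 / (2 * 2 ^ |α - 1|) * ((|a| + |b|) ^ (α - 1) * (a - b))
        ≤ min α 1 / (2 * 2 ^ |α - 1|) * (2 ^ |α - 1| * R ^ (α - 1) * (a - b)) := by
          have hmin : 0 < min α 1 := lt_min hα one_pos
          gcongr
      _ = min α 1 / 2 * (R ^ (α - 1) * (a - b)) := by field_simp
      _ ≤ _ := lower
  · calc signedRpow α a - signedRpow α b ≤ max α 2 * (R ^ (α - 1) * (a - b)) := upper
      _ ≤ max α 2 * (2 ^ |α - 1| * (|a| + |b|) ^ (α - 1) * (a - b)) := by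
          have hmax : (0 : ℝ) < max α 2 := lt_max_of_lt_right two_pos
          gcongr
      _ = _ := by ring

noncomputable def zetaPlus (α f k : ℝ) : ℝ :=
  α * ∫ s in k..f, |s| ^ (α - 1) * max (s - k) 0

noncomputable def zetaMinus (α f k : ℝ) : ℝ :=
  -(α * ∫ s in k..f, |s| ^ (α - 1) * max (k - s) 0)

lemma zetaMinus_eq_zetaPlus_neg (α f k : ℝ) : zetaMinus α f k = zetaPlus α (-f) (-k) := by
  have reflect := intervalIntegral.integral_comp_neg (a := f) (b := k)
    (fun s => |s| ^ (α - 1) * max (s - -k) 0)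
  simp only [abs_neg, neg_sub_neg] at reflect
  rw [zetaMinus, zetaPlus, ← reflect, intervalIntegral.integral_symm, mul_neg, neg_neg]

lemma zetaPlus_of_le {α f k : ℝ} (hfk : f ≤ k) : zetaPlus α f k = 0 := by
  rw [zetaPlus, intervalIntegral.integral_congr (g := fun _ => 0), intervalIntegral.integral_zero,
    mul_zero]
  intro s hs
  rw [Set.uIcc_of_ge hfk] at hs
  simp [hs.2]

lemma zetaPlus_of_lt {α f k : ℝ} (hkf : k < f) :
    zetaPlus α f k = α * ∫ s in k..f, |s| ^ (α - 1) * (s - k) := by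
  rw [zetaPlus, intervalIntegral.integral_congr]
  intro s hs
  rw [Set.uIcc_of_le hkf.le] at hs
  simp [hs.1]

lemma zetaPlus_le_mul_signedRpow_sub {α f k : ℝ} (hα : 0 < α) (hkf : k < f) :
    zetaPlus α f k ≤ (f - k) * (signedRpow α f - signedRpow α k) := by
  have weight := intervalIntegrable_abs_rpow (r := α - 1) (by linarith) k f
  rw [zetaPlus_of_lt hkf, ← mul_integral_abs_rpow_sub_one hα, mul_left_comm, mul_comm (f - k),
    ← intervalIntegral.integral_mul_const]
  gcongr
  refine intervalIntegral.integral_mono_on hkf.le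
    (weight.mul_continuousOn (continuous_id.sub continuous_const).continuousOn)
    (weight.mul_const _) fun s hs => ?_
  exact mul_le_mul_of_nonneg_left (by linarith [hs.2]) (rpow_nonneg (abs_nonneg s) _)

lemma half_mul_signedRpow_sub_le_zetaPlus {α f k : ℝ} (hα : 0 < α) (hkf : k < f) :
    (f - k) / 2 * (signedRpow α f - signedRpow α ((k + f) / 2)) ≤ zetaPlus α f k := by
  set m := (k + f) / 2 with hm
  have weight := intervalIntegrable_abs_rpow (r := α - 1) (by linarith)
  have weighted : ∀ x y, IntervalIntegrable (fun s => |s| ^ (α - 1) * (s - k)) volume x y :=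
    fun x y => (weight x y).mul_continuousOn (continuous_id.sub continuous_const).continuousOn
  rw [zetaPlus_of_lt hkf, ← mul_integral_abs_rpow_sub_one hα, mul_left_comm,
    mul_comm ((f - k) / 2), ← intervalIntegral.integral_mul_const,
    ← intervalIntegral.integral_add_adjacent_intervals (weighted k m) (weighted m f)]
  gcongr
  calc ∫ s in m..f, |s| ^ (α - 1) * ((f - k) / 2)
      ≤ ∫ s in m..f, |s| ^ (α - 1) * (s - k) := by
        refine intervalIntegral.integral_mono_on (by linarith) ((weight m f).mul_const _)
          (weighted m f) fun s hs => ?_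
        exact mul_le_mul_of_nonneg_left (by linarith [hs.1]) (rpow_nonneg (abs_nonneg s) _)
    _ ≤ _ := by
        refine le_add_of_nonneg_left (intervalIntegral.integral_nonneg (by linarith) ?_)
        exact fun s hs => mul_nonneg (rpow_nonneg (abs_nonneg s) _) (by linarith [hs.1])

lemma zetaPlus_le_of_lt {α f k : ℝ} (hα : 0 < α) (hkf : k < f) :
    zetaPlus α f k ≤ max α 2 * 2 ^ |α - 1| * ((|f| + |k|) ^ (α - 1) * (f - k) ^ 2) :=
  calc zetaPlus α f k ≤ (f - k) * (signedRpow α f - signedRpow α k) :=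
        zetaPlus_le_mul_signedRpow_sub hα hkf
    _ ≤ (f - k) * (max α 2 * 2 ^ |α - 1| * ((|f| + |k|) ^ (α - 1) * (f - k))) := by
        have hd : 0 < f - k := sub_pos.2 hkf
        gcongr
        exact (signedRpow_sub_bounds hα hkf).2
    _ = _ := by ring

lemma le_zetaPlus_of_lt {α f k : ℝ} (hα : 0 < α) (hkf : k < f) :
    min α 1 / (8 * (2 ^ |α - 1|) ^ 2) * ((|f| + |k|) ^ (α - 1) * (f - k) ^ 2)
      ≤ zetaPlus α f k := by
  obtain ⟨m, hm⟩ : ∃ m, m = (k + f) / 2 := ⟨_, rfl⟩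
  have hM : 0 < |f| + |k| := by
    rcases eq_or_ne f 0 with rfl | hf
    · simpa using hkf.ne
    · positivity
  have hm_abs : |m| ≤ (|f| + |k|) / 2 := by
    rw [hm, abs_div, abs_two, add_comm |f|]; gcongr; exact abs_add_le k f
  have hk_abs : |k| ≤ 2 * |m| + |f| := by
    have := abs_sub (2 * m) f
    rwa [show 2 * m - f = k by linarith, abs_mul, abs_two] at this
  have comparable := rpow_le_rpow_abs_mul_rpow (p := α - 1) hM one_le_two
    (by linarith : |f| + |k| ≤ 2 * (|f| + |m|))
    (by linarith [abs_nonneg f, abs_nonneg k] : |f| + |m| ≤ 2 * (|f| + |k|))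
  have near := (signedRpow_sub_bounds hα (show m < f by linarith)).1
  have hmin : 0 < min α 1 := lt_min hα one_pos
  have hd : 0 < f - k := sub_pos.2 hkf
  calc min α 1 / (8 * (2 ^ |α - 1|) ^ 2) * ((|f| + |k|) ^ (α - 1) * (f - k) ^ 2)
      ≤ min α 1 / (8 * (2 ^ |α - 1|) ^ 2)
          * (2 ^ |α - 1| * (|f| + |m|) ^ (α - 1) * (f - k) ^ 2) := by
        gcongr
    _ = (f - k) / 2 * (min α 1 / (2 * 2 ^ |α - 1|) * ((|f| + |m|) ^ (α - 1) * (f - m))) := by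
        rw [hm]; field_simp; ring
    _ ≤ (f - k) / 2 * (signedRpow α f - signedRpow α m) := by
        gcongr
    _ ≤ zetaPlus α f k := hm ▸ half_mul_signedRpow_sub_le_zetaPlus hα hkf

lemma exists_zetaPlus_bounds {α : ℝ} (hα : 0 < α) :
    ∃ γ > (0 : ℝ), ∀ f k : ℝ,
      1 / γ * (|f| + |k|) ^ (α - 1) * max (f - k) 0 ^ 2 ≤ zetaPlus α f k ∧
        zetaPlus α f k ≤ γ * (|f| + |k|) ^ (α - 1) * max (f - k) 0 ^ 2 := by
  set c := min α 1 / (8 * (2 ^ |α - 1|) ^ 2)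
  set C := max α 2 * 2 ^ |α - 1|
  have hc : 0 < c := div_pos (lt_min hα one_pos) (by positivity)
  have hC : 0 < C := mul_pos (lt_max_of_lt_right two_pos) (by positivity)
  refine ⟨max C c⁻¹, lt_max_of_lt_left hC, fun f k => ?_⟩
  rcases le_or_gt f k with hfk | hkf
  · simp [zetaPlus_of_le hfk, max_eq_right (sub_nonpos.2 hfk)]
  have hX : 0 ≤ (|f| + |k|) ^ (α - 1) * (f - k) ^ 2 := by positivity
  have hγ : 1 / max C c⁻¹ ≤ c := by
    simpa using one_div_le_one_div_of_le (inv_pos.2 hc) (le_max_right C c⁻¹)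
  rw [max_eq_left (sub_pos.2 hkf).le, mul_assoc, mul_assoc]
  exact ⟨(mul_le_mul_of_nonneg_right hγ hX).trans (le_zetaPlus_of_lt hα hkf),
    (zetaPlus_le_of_lt hα hkf).trans (mul_le_mul_of_nonneg_right (le_max_left C c⁻¹) hX)⟩

/-- Two-sided bounds for `ζ_±(f,k)`: with `ζ₊(f,k) = α ∫_k^f |s|^{α−1}(s−k)₊ ds` and
`ζ₋(f,k) = −α ∫_k^f |s|^{α−1}(s−k)₋ ds`, there is `γ = γ(α) > 0` with
`(1/γ)(|f|+|k|)^{α−1}(f−k)_±² ≤ ζ_±(f,k) ≤ γ(|f|+|k|)^{α−1}(f−k)_±²`. -/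
theorem zeta_two_sided_bounds (α : ℝ) (hα : 0 < α) :
    ∃ γ > (0 : ℝ), ∀ f k : ℝ,
      ((1 / γ) * (|f| + |k|) ^ (α - 1) * (max (f - k) 0) ^ 2
          ≤ α * ∫ s in k..f, |s| ^ (α - 1) * max (s - k) 0) ∧
      (α * ∫ s in k..f, |s| ^ (α - 1) * max (s - k) 0
          ≤ γ * (|f| + |k|) ^ (α - 1) * (max (f - k) 0) ^ 2) ∧
      ((1 / γ) * (|f| + |k|) ^ (α - 1) * (max (k - f) 0) ^ 2
          ≤ -(α * ∫ s in k..f, |s| ^ (α - 1) * max (k - s) 0)) ∧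
      (-(α * ∫ s in k..f, |s| ^ (α - 1) * max (k - s) 0)
          ≤ γ * (|f| + |k|) ^ (α - 1) * (max (k - f) 0) ^ 2) := by
  obtain ⟨γ, hγ, bounds⟩ := exists_zetaPlus_bounds hα
  refine ⟨γ, hγ, fun f k => ?_⟩
  obtain ⟨plus_lower, plus_upper⟩ := bounds f k
  obtain ⟨minus_lower, minus_upper⟩ := bounds (-f) (-k)
  rw [← zetaMinus_eq_zetaPlus_neg, abs_neg, abs_neg, neg_sub_neg] at minus_lower minus_upper
  exact ⟨plus_lower, plus_upper, minus_lower, minus_upper⟩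
end
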